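/- Let 0 < δ ≤ π/16 and t ≥ 1/sin(2δ), and set L(θ) = (1 − e^{−t sin θ})/sin θ. Then L(2δ) ≤ (1/1.96)(1 + e^{−1/2}) L(δ) ≤ 0.82 L(δ), and consequently L(δ) − L(2δ) ≥ (1/5) L(2δ). -/

import Mathlib

/-!
Since `sin (2δ) ≤ 2 sin δ`, the numerator of `L (2δ)` is at most
`1 - e^{-2x} = (1 - e^{-x}) (1 + e^{-x})` with `x = t sin δ ≥ 1/2`, hence at most
`(1 + e^{-1/2})` times the numerator of `L δ`; for `δ ≤ π/16` the denominator satisfies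
`sin (2δ) = 2 cos δ sin δ ≥ 1.96 sin δ`. Numerically `(1 + e^{-1/2}) / 1.96 ≤ 0.82`, and
`1/0.82 - 1 ≥ 1/5`.
-/

open Real

lemma one_sub_exp_neg_le_of_le_two_mul {a x y : ℝ} (hx : 0 ≤ x) (hax : a ≤ x)
    (hy : y ≤ 2 * x) : 1 - exp (-y) ≤ (1 + exp (-a)) * (1 - exp (-x)) := by
  have hfactor : 1 - exp (-(2 * x)) = (1 + exp (-x)) * (1 - exp (-x)) := by
    rw [show -(2 * x) = -x + -x by ring, exp_add]; ring
  have hexp : exp (-x) ≤ exp (-a) := exp_le_exp.mpr (by linarith)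
  have hnum : 0 ≤ 1 - exp (-x) := sub_nonneg.mpr (exp_le_one_iff.mpr (by linarith))
  calc 1 - exp (-y) ≤ 1 - exp (-(2 * x)) := by gcongr
    _ = (1 + exp (-x)) * (1 - exp (-x)) := hfactor
    _ ≤ (1 + exp (-a)) * (1 - exp (-x)) := by gcongr

lemma one_sub_exp_neg_mul_div_le {k s s₂ t : ℝ} (hk : 0 < k) (hs : 0 < s)
    (hks : k * s ≤ s₂) (hs₂ : s₂ ≤ 2 * s) (ht : 1 ≤ t * s₂) :
    (1 - exp (-(t * s₂))) / s₂ ≤ 1 / k * (1 + exp (-(1 / 2))) * ((1 - exp (-(t * s))) / s) := by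
  have hks_pos : 0 < k * s := mul_pos hk hs
  have ht_pos : 0 < t := pos_of_mul_pos_left (a := t) (b := s₂) (by linarith) (by linarith)
  have hts : 1 / 2 ≤ t * s := by nlinarith
  have hnum := one_sub_exp_neg_le_of_le_two_mul (by linarith) hts
    (show t * s₂ ≤ 2 * (t * s) by nlinarith)
  calc (1 - exp (-(t * s₂))) / s₂
      ≤ (1 + exp (-(1 / 2))) * (1 - exp (-(t * s))) / (k * s) :=
        div_le_div₀ (le_trans (sub_nonneg.mpr (exp_le_one_iff.mpr (by linarith))) hnum)
          hnum hks_pos hks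
    _ = 1 / k * (1 + exp (-(1 / 2))) * ((1 - exp (-(t * s))) / s) := by
        field_simp

lemma mul_sin_le_sin_two_mul {δ : ℝ} (hδ : 0 ≤ δ) (hδ' : δ ≤ π / 16) :
    1.96 * sin δ ≤ sin (2 * δ) := by
  have hcos : 0.98 ≤ cos δ := by
    have := one_sub_sq_div_two_le_cos (x := δ)
    nlinarith [pi_lt_d2]
  have hsin : 0 ≤ sin δ := sin_nonneg_of_nonneg_of_le_pi hδ (by linarith [pi_pos])
  rw [sin_two_mul]
  nlinarith

lemma sin_two_mul_le_two_mul_sin {δ : ℝ} (hδ : 0 ≤ sin δ) : sin (2 * δ) ≤ 2 * sin δ := by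
  rw [sin_two_mul]
  nlinarith [cos_le_one δ]

lemma exp_neg_half_le : exp (-(1 / 2)) ≤ 0.6072 := by
  have hsq : exp (1 / 2) * exp (1 / 2) = exp 1 := by rw [← exp_add]; norm_num
  have hhalf : 1.647 ≤ exp (1 / 2) := by nlinarith [exp_one_gt_d9, exp_pos (1 / 2)]
  rw [exp_neg, inv_le_comm₀ (exp_pos _) (by norm_num)]
  linarith

lemma one_sub_exp_neg_mul_div_nonneg {s t : ℝ} (hs : 0 < s) (ht : 0 ≤ t) :
    0 ≤ (1 - exp (-(t * s))) / s :=
  div_nonneg (sub_nonneg.mpr (exp_le_one_iff.mpr (by nlinarith))) hs.le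

/-- **Gap bound for `L(θ)` in the regime `t ≥ 1/sin(2δ)`.**
For `0 < δ ≤ π/16` and `t` with `t·sin(2δ) ≥ 1` (i.e. `t ≥ 1/sin(2δ)`), the
function `L(θ) = (1 − e^{−t·sin θ})/sin θ` satisfies
`L(2δ) ≤ (1/1.96)(1 + e^{−1/2})·L(δ) ≤ 0.82·L(δ)`, and consequently
`L(δ) − L(2δ) ≥ (1/5)·L(2δ)`. -/
theorem L_gap_large_t
    (δ t : ℝ) (hδ : 0 < δ) (hδ' : δ ≤ Real.pi / 16)
    (htδ : 1 ≤ t * Real.sin (2 * δ))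
    (L : ℝ → ℝ)
    (hL : ∀ θ : ℝ, L θ = (1 - Real.exp (-(t * Real.sin θ))) / Real.sin θ) :
    L (2 * δ) ≤ (1 / 1.96) * (1 + Real.exp (-(1 / 2))) * L δ ∧
      (1 / 1.96) * (1 + Real.exp (-(1 / 2))) * L δ ≤ 0.82 * L δ ∧
      L δ - L (2 * δ) ≥ (1 / 5) * L (2 * δ) := by
  have hs : 0 < sin δ := sin_pos_of_pos_of_lt_pi hδ (by linarith [pi_pos])
  have hs₂ : 0 < sin (2 * δ) := sin_pos_of_pos_of_lt_pi (by linarith) (by linarith [pi_pos])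
  have ht : 0 ≤ t := (pos_of_mul_pos_left (a := t) (by linarith) hs₂.le).le
  have hLδ : 0 ≤ L δ := hL δ ▸ one_sub_exp_neg_mul_div_nonneg hs ht
  have hL₂δ : 0 ≤ L (2 * δ) := hL (2 * δ) ▸ one_sub_exp_neg_mul_div_nonneg hs₂ ht
  have hgap : L (2 * δ) ≤ 1 / 1.96 * (1 + exp (-(1 / 2))) * L δ := by
    rw [hL, hL]
    exact one_sub_exp_neg_mul_div_le (by norm_num) hs (mul_sin_le_sin_two_mul hδ.le hδ')
      (sin_two_mul_le_two_mul_sin hs.le) htδ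
  have hconst : 1 / 1.96 * (1 + exp (-(1 / 2))) * L δ ≤ 0.82 * L δ := by
    gcongr
    linarith [exp_neg_half_le]
  exact ⟨hgap, hconst, by linarith⟩
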